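/- Let a₂₀, b₂₀ ∈ ℝ with b₂₀ ≠ 0, let p, q, r : ℝ² → ℝ be smooth functions with vanishing 2-jet at the origin, and let f(x,y) = (x, a₂₀x² + y² + p(x,y), b₂₀x² + q(x,y), r(x,y)). For a = (0, v₂, v₃, v₄) ∈ ℝ⁴, the Hessian of d_a at the origin is the zero matrix if and only if v₂ = 0 and v₃ = 1/(2b₂₀) (with v₄ arbitrary). Moreover, this set of umbilical foci, the line {(0, 0, 1/(2b₂₀), t) : t ∈ ℝ}, is exactly the intersection of the two planes {v₂ = 0} and {2a₂₀v₂ + 2b₂₀v₃ = 1} constituting the focal set. -/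

import Mathlib

/-- Partial derivative in the first variable of a function of two real variables. -/
noncomputable def pdx (g : ℝ → ℝ → ℝ) (x y : ℝ) : ℝ := deriv (fun t => g t y) x

/-- Partial derivative in the second variable of a function of two real variables. -/
noncomputable def pdy (g : ℝ → ℝ → ℝ) (x y : ℝ) : ℝ := deriv (fun t => g x t) y

/-- The Hessian matrix at the origin of a function of two real variables. -/
noncomputable def hessAt0 (g : ℝ → ℝ → ℝ) : Matrix (Fin 2) (Fin 2) ℝ :=
  !![pdx (pdx g) 0 0, pdy (pdx g) 0 0;
     pdx (pdy g) 0 0, pdy (pdy g) 0 0]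

/-- A function of two real variables has vanishing 2-jet at the origin: its value and all
first- and second-order partial derivatives vanish at `(0,0)`. -/
noncomputable def jet2ZeroAt0 (g : ℝ → ℝ → ℝ) : Prop :=
  g 0 0 = 0 ∧ pdx g 0 0 = 0 ∧ pdy g 0 0 = 0 ∧ hessAt0 g = 0

lemma mat2_eq_zero {a b c d : ℝ} :
    (!![a, b; c, d] : Matrix (Fin 2) (Fin 2) ℝ) = 0 ↔ a = 0 ∧ b = 0 ∧ c = 0 ∧ d = 0 := by
  rw [← Matrix.ext_iff]
  simp [Fin.forall_fin_two]
  tauto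

variable {g p q r : ℝ → ℝ → ℝ}

lemma sliceX_hasDerivAt (hg : ContDiff ℝ (⊤ : ℕ∞) (fun w : ℝ × ℝ => g w.1 w.2)) (x y : ℝ) :
    HasDerivAt (fun t => g t y) (pdx g x y) x := by
  have h1 : DifferentiableAt ℝ (fun w : ℝ × ℝ => g w.1 w.2) (x, y) :=
    (hg.differentiable (by simp)).differentiableAt
  exact (h1.comp x (DifferentiableAt.prodMk differentiableAt_id (differentiableAt_const y))).hasDerivAt

lemma sliceY_hasDerivAt (hg : ContDiff ℝ (⊤ : ℕ∞) (fun w : ℝ × ℝ => g w.1 w.2)) (x y : ℝ) :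
    HasDerivAt (fun t => g x t) (pdy g x y) y := by
  have h1 : DifferentiableAt ℝ (fun w : ℝ × ℝ => g w.1 w.2) (x, y) :=
    (hg.differentiable (by simp)).differentiableAt
  exact (h1.comp y (DifferentiableAt.prodMk (differentiableAt_const x) differentiableAt_id)).hasDerivAt

lemma pdx_eq_fderiv (hg : ContDiff ℝ (⊤ : ℕ∞) (fun w : ℝ × ℝ => g w.1 w.2)) (x y : ℝ) :
    pdx g x y = fderiv ℝ (fun w : ℝ × ℝ => g w.1 w.2) (x, y) (1, 0) := by
  have hf : HasFDerivAt (fun w : ℝ × ℝ => g w.1 w.2)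
      (fderiv ℝ (fun w : ℝ × ℝ => g w.1 w.2) (x, y)) (x, y) :=
    ((hg.differentiable (by simp)) (x, y)).hasFDerivAt
  have hc : HasDerivAt (fun t : ℝ => ((t, y) : ℝ × ℝ)) ((1 : ℝ), (0 : ℝ)) x :=
    HasDerivAt.prodMk (hasDerivAt_id x) (hasDerivAt_const x y)
  exact (hf.comp_hasDerivAt x hc).deriv

lemma pdy_eq_fderiv (hg : ContDiff ℝ (⊤ : ℕ∞) (fun w : ℝ × ℝ => g w.1 w.2)) (x y : ℝ) :
    pdy g x y = fderiv ℝ (fun w : ℝ × ℝ => g w.1 w.2) (x, y) (0, 1) := by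
  have hf : HasFDerivAt (fun w : ℝ × ℝ => g w.1 w.2)
      (fderiv ℝ (fun w : ℝ × ℝ => g w.1 w.2) (x, y)) (x, y) :=
    ((hg.differentiable (by simp)) (x, y)).hasFDerivAt
  have hc : HasDerivAt (fun t : ℝ => ((x, t) : ℝ × ℝ)) ((0 : ℝ), (1 : ℝ)) y :=
    HasDerivAt.prodMk (hasDerivAt_const y x) (hasDerivAt_id y)
  exact (hf.comp_hasDerivAt y hc).deriv

lemma contDiff_pdx (hg : ContDiff ℝ (⊤ : ℕ∞) (fun w : ℝ × ℝ => g w.1 w.2)) :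
    ContDiff ℝ (⊤ : ℕ∞) (fun w : ℝ × ℝ => pdx g w.1 w.2) := by
  have h : (fun w : ℝ × ℝ => pdx g w.1 w.2)
      = fun w : ℝ × ℝ => fderiv ℝ (fun w : ℝ × ℝ => g w.1 w.2) w (1, 0) := by
    funext w; exact pdx_eq_fderiv hg w.1 w.2
  rw [h]; exact (hg.fderiv_right (by simp)).clm_apply contDiff_const

lemma contDiff_pdy (hg : ContDiff ℝ (⊤ : ℕ∞) (fun w : ℝ × ℝ => g w.1 w.2)) :
    ContDiff ℝ (⊤ : ℕ∞) (fun w : ℝ × ℝ => pdy g w.1 w.2) := by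
  have h : (fun w : ℝ × ℝ => pdy g w.1 w.2)
      = fun w : ℝ × ℝ => fderiv ℝ (fun w : ℝ × ℝ => g w.1 w.2) w (0, 1) := by
    funext w; exact pdy_eq_fderiv hg w.1 w.2
  rw [h]; exact (hg.fderiv_right (by simp)).clm_apply contDiff_const

lemma jet_vals (hgj : jet2ZeroAt0 g) :
    g 0 0 = 0 ∧ pdx g 0 0 = 0 ∧ pdy g 0 0 = 0 ∧ pdx (pdx g) 0 0 = 0 ∧
    pdy (pdx g) 0 0 = 0 ∧ pdx (pdy g) 0 0 = 0 ∧ pdy (pdy g) 0 0 = 0 := by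
  obtain ⟨h0, h1, h2, h3⟩ := hgj
  rw [hessAt0, mat2_eq_zero] at h3
  exact ⟨h0, h1, h2, h3.1, h3.2.1, h3.2.2.1, h3.2.2.2⟩

lemma hess_d (a₂₀ b₂₀ v₂ v₃ v₄ : ℝ)
    (hp : ContDiff ℝ (⊤ : ℕ∞) (fun w : ℝ × ℝ => p w.1 w.2))
    (hq : ContDiff ℝ (⊤ : ℕ∞) (fun w : ℝ × ℝ => q w.1 w.2))
    (hr : ContDiff ℝ (⊤ : ℕ∞) (fun w : ℝ × ℝ => r w.1 w.2))
    (hpj : jet2ZeroAt0 p) (hqj : jet2ZeroAt0 q) (hrj : jet2ZeroAt0 r) :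
    hessAt0 (fun x y => x ^ 2 + (a₂₀ * x ^ 2 + y ^ 2 + p x y - v₂) ^ 2
        + (b₂₀ * x ^ 2 + q x y - v₃) ^ 2 + (r x y - v₄) ^ 2)
      = !![2 - 4 * a₂₀ * v₂ - 4 * b₂₀ * v₃, 0; 0, -4 * v₂] := by
  obtain ⟨hp00, hpx, hpy, hpxx, hpxy, hpyx, hpyy⟩ := jet_vals hpj
  obtain ⟨hq00, hqx, hqy, hqxx, hqxy, hqyx, hqyy⟩ := jet_vals hqj
  obtain ⟨hr00, hrx, hry, hrxx, hrxy, hryx, hryy⟩ := jet_vals hrj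
  set D : ℝ → ℝ → ℝ := fun x y => x ^ 2 + (a₂₀ * x ^ 2 + y ^ 2 + p x y - v₂) ^ 2
        + (b₂₀ * x ^ 2 + q x y - v₃) ^ 2 + (r x y - v₄) ^ 2 with hD
  -- formula for pdx D
  have hdx : ∀ x y : ℝ, pdx D x y
      = 2 * x + 2 * (a₂₀ * x ^ 2 + y ^ 2 + p x y - v₂) * (2 * a₂₀ * x + pdx p x y)
        + 2 * (b₂₀ * x ^ 2 + q x y - v₃) * (2 * b₂₀ * x + pdx q x y)
        + 2 * (r x y - v₄) * pdx r x y := by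
    intro x y
    have h1 : HasDerivAt (fun t : ℝ => t ^ 2) (2 * x) x := by
      simpa using hasDerivAt_pow 2 x
    have hA : HasDerivAt (fun t : ℝ => a₂₀ * t ^ 2 + y ^ 2 + p t y - v₂)
        (a₂₀ * (2 * x) + pdx p x y) x :=
      (((h1.const_mul a₂₀).add_const (y ^ 2)).add (sliceX_hasDerivAt hp x y)).sub_const v₂
    have hB : HasDerivAt (fun t : ℝ => b₂₀ * t ^ 2 + q t y - v₃)
        (b₂₀ * (2 * x) + pdx q x y) x :=
      ((h1.const_mul b₂₀).add (sliceX_hasDerivAt hq x y)).sub_const v₃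
    have hC : HasDerivAt (fun t : ℝ => r t y - v₄) (pdx r x y) x :=
      (sliceX_hasDerivAt hr x y).sub_const v₄
    have H := ((h1.add (hA.pow 2)).add (hB.pow 2)).add (hC.pow 2)
    have hval := H.deriv
    have : pdx D x y = deriv (fun t : ℝ => t ^ 2 + (a₂₀ * t ^ 2 + y ^ 2 + p t y - v₂) ^ 2
        + (b₂₀ * t ^ 2 + q t y - v₃) ^ 2 + (r t y - v₄) ^ 2) x := rfl
    rw [this]; exact hval.trans (by ring)
  have hdy : ∀ x y : ℝ, pdy D x y
      = 2 * (a₂₀ * x ^ 2 + y ^ 2 + p x y - v₂) * (2 * y + pdy p x y)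
        + 2 * (b₂₀ * x ^ 2 + q x y - v₃) * pdy q x y
        + 2 * (r x y - v₄) * pdy r x y := by
    intro x y
    have h1 : HasDerivAt (fun t : ℝ => t ^ 2) (2 * y) y := by
      simpa using hasDerivAt_pow 2 y
    have hA : HasDerivAt (fun t : ℝ => a₂₀ * x ^ 2 + t ^ 2 + p x t - v₂)
        (2 * y + pdy p x y) y := by
      have := (((hasDerivAt_const y (a₂₀ * x ^ 2)).add h1).add (sliceY_hasDerivAt hp x y)).sub_const v₂
      simpa using this
    have hB : HasDerivAt (fun t : ℝ => b₂₀ * x ^ 2 + q x t - v₃) (pdy q x y) y := by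
      have := ((hasDerivAt_const y (b₂₀ * x ^ 2)).add (sliceY_hasDerivAt hq x y)).sub_const v₃
      simpa using this
    have hC : HasDerivAt (fun t : ℝ => r x t - v₄) (pdy r x y) y :=
      (sliceY_hasDerivAt hr x y).sub_const v₄
    have H := (((hasDerivAt_const y (x ^ 2)).add (hA.pow 2)).add (hB.pow 2)).add (hC.pow 2)
    have hval := H.deriv
    have : pdy D x y = deriv (fun t : ℝ => x ^ 2 + (a₂₀ * x ^ 2 + t ^ 2 + p x t - v₂) ^ 2
        + (b₂₀ * x ^ 2 + q x t - v₃) ^ 2 + (r x t - v₄) ^ 2) y := rfl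
    rw [this]; exact hval.trans (by ring)
  -- entry (0,0)
  have e11 : pdx (pdx D) 0 0 = 2 - 4 * a₂₀ * v₂ - 4 * b₂₀ * v₃ := by
    have hF : (fun t : ℝ => pdx D t 0)
        = fun t : ℝ => 2 * t + 2 * (a₂₀ * t ^ 2 + 0 ^ 2 + p t 0 - v₂) * (2 * a₂₀ * t + pdx p t 0)
          + 2 * (b₂₀ * t ^ 2 + q t 0 - v₃) * (2 * b₂₀ * t + pdx q t 0)
          + 2 * (r t 0 - v₄) * pdx r t 0 := funext fun t => hdx t 0
    have h1 : HasDerivAt (fun t : ℝ => t ^ 2) (2 * 0) (0 : ℝ) := by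
      simpa using hasDerivAt_pow 2 (0 : ℝ)
    have hid : HasDerivAt (fun t : ℝ => 2 * t) 2 (0 : ℝ) := by
      simpa using (hasDerivAt_id (0 : ℝ)).const_mul (2 : ℝ)
    have hA : HasDerivAt (fun t : ℝ => a₂₀ * t ^ 2 + 0 ^ 2 + p t 0 - v₂)
        (a₂₀ * (2 * 0) + pdx p 0 0) (0 : ℝ) :=
      (((h1.const_mul a₂₀).add_const ((0 : ℝ) ^ 2)).add (sliceX_hasDerivAt hp 0 0)).sub_const v₂
    have hA2 : HasDerivAt (fun t : ℝ => 2 * a₂₀ * t + pdx p t 0)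
        (2 * a₂₀ + pdx (pdx p) 0 0) (0 : ℝ) := by
      have := (((hasDerivAt_id (0 : ℝ)).const_mul (2 * a₂₀)).add
        (sliceX_hasDerivAt (contDiff_pdx hp) 0 0))
      simp only [mul_one] at this; exact this
    have hB : HasDerivAt (fun t : ℝ => b₂₀ * t ^ 2 + q t 0 - v₃)
        (b₂₀ * (2 * 0) + pdx q 0 0) (0 : ℝ) :=
      ((h1.const_mul b₂₀).add (sliceX_hasDerivAt hq 0 0)).sub_const v₃
    have hB2 : HasDerivAt (fun t : ℝ => 2 * b₂₀ * t + pdx q t 0)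
        (2 * b₂₀ + pdx (pdx q) 0 0) (0 : ℝ) := by
      have := (((hasDerivAt_id (0 : ℝ)).const_mul (2 * b₂₀)).add
        (sliceX_hasDerivAt (contDiff_pdx hq) 0 0))
      simp only [mul_one] at this; exact this
    have hC : HasDerivAt (fun t : ℝ => r t 0 - v₄) (pdx r 0 0) (0 : ℝ) :=
      (sliceX_hasDerivAt hr 0 0).sub_const v₄
    have hC2 : HasDerivAt (fun t : ℝ => pdx r t 0) (pdx (pdx r) 0 0) (0 : ℝ) :=
      sliceX_hasDerivAt (contDiff_pdx hr) 0 0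
    have H := ((hid.add ((hA.const_mul 2).mul hA2)).add ((hB.const_mul 2).mul hB2)).add
      ((hC.const_mul 2).mul hC2)
    have : pdx (pdx D) 0 0 = deriv (fun t : ℝ => pdx D t 0) 0 := rfl
    rw [this, hF]; refine H.deriv.trans ?_
    simp only [hp00, hpx, hpxx, hq00, hqx, hqxx, hr00, hrx, hrxx]
    ring
  -- entry (0,1)
  have e12 : pdy (pdx D) 0 0 = 0 := by
    have hF : (fun t : ℝ => pdx D 0 t)
        = fun t : ℝ => 2 * 0 + 2 * (a₂₀ * 0 ^ 2 + t ^ 2 + p 0 t - v₂) * (2 * a₂₀ * 0 + pdx p 0 t)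
          + 2 * (b₂₀ * 0 ^ 2 + q 0 t - v₃) * (2 * b₂₀ * 0 + pdx q 0 t)
          + 2 * (r 0 t - v₄) * pdx r 0 t := funext fun t => hdx 0 t
    have h1 : HasDerivAt (fun t : ℝ => t ^ 2) (2 * 0) (0 : ℝ) := by
      simpa using hasDerivAt_pow 2 (0 : ℝ)
    have hA : HasDerivAt (fun t : ℝ => a₂₀ * 0 ^ 2 + t ^ 2 + p 0 t - v₂)
        (0 + 2 * 0 + pdy p 0 0) (0 : ℝ) :=
      (((hasDerivAt_const (0 : ℝ) (a₂₀ * 0 ^ 2)).add h1).add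
        (sliceY_hasDerivAt hp 0 0)).sub_const v₂
    have hA2 : HasDerivAt (fun t : ℝ => 2 * a₂₀ * 0 + pdx p 0 t)
        (0 + pdy (pdx p) 0 0) (0 : ℝ) :=
      (hasDerivAt_const (0 : ℝ) (2 * a₂₀ * 0)).add (sliceY_hasDerivAt (contDiff_pdx hp) 0 0)
    have hB : HasDerivAt (fun t : ℝ => b₂₀ * 0 ^ 2 + q 0 t - v₃)
        (0 + pdy q 0 0) (0 : ℝ) :=
      ((hasDerivAt_const (0 : ℝ) (b₂₀ * 0 ^ 2)).add (sliceY_hasDerivAt hq 0 0)).sub_const v₃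
    have hB2 : HasDerivAt (fun t : ℝ => 2 * b₂₀ * 0 + pdx q 0 t)
        (0 + pdy (pdx q) 0 0) (0 : ℝ) :=
      (hasDerivAt_const (0 : ℝ) (2 * b₂₀ * 0)).add (sliceY_hasDerivAt (contDiff_pdx hq) 0 0)
    have hC : HasDerivAt (fun t : ℝ => r 0 t - v₄) (pdy r 0 0) (0 : ℝ) :=
      (sliceY_hasDerivAt hr 0 0).sub_const v₄
    have hC2 : HasDerivAt (fun t : ℝ => pdx r 0 t) (pdy (pdx r) 0 0) (0 : ℝ) :=
      sliceY_hasDerivAt (contDiff_pdx hr) 0 0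
    have H := (((hasDerivAt_const (0 : ℝ) (2 * 0)).add ((hA.const_mul 2).mul hA2)).add
      ((hB.const_mul 2).mul hB2)).add ((hC.const_mul 2).mul hC2)
    have : pdy (pdx D) 0 0 = deriv (fun t : ℝ => pdx D 0 t) 0 := rfl
    rw [this, hF]; refine H.deriv.trans ?_
    simp only [hp00, hpx, hpy, hpxy, hq00, hqy, hqxy, hr00, hry, hrxy]
    ring
  -- entry (1,0)
  have e21 : pdx (pdy D) 0 0 = 0 := by
    have hF : (fun t : ℝ => pdy D t 0)
        = fun t : ℝ => 2 * (a₂₀ * t ^ 2 + 0 ^ 2 + p t 0 - v₂) * (2 * 0 + pdy p t 0)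
          + 2 * (b₂₀ * t ^ 2 + q t 0 - v₃) * pdy q t 0
          + 2 * (r t 0 - v₄) * pdy r t 0 := funext fun t => hdy t 0
    have h1 : HasDerivAt (fun t : ℝ => t ^ 2) (2 * 0) (0 : ℝ) := by
      simpa using hasDerivAt_pow 2 (0 : ℝ)
    have hA : HasDerivAt (fun t : ℝ => a₂₀ * t ^ 2 + 0 ^ 2 + p t 0 - v₂)
        (a₂₀ * (2 * 0) + pdx p 0 0) (0 : ℝ) :=
      (((h1.const_mul a₂₀).add_const ((0 : ℝ) ^ 2)).add (sliceX_hasDerivAt hp 0 0)).sub_const v₂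
    have hA2 : HasDerivAt (fun t : ℝ => 2 * 0 + pdy p t 0)
        (0 + pdx (pdy p) 0 0) (0 : ℝ) :=
      (hasDerivAt_const (0 : ℝ) (2 * 0)).add (sliceX_hasDerivAt (contDiff_pdy hp) 0 0)
    have hB : HasDerivAt (fun t : ℝ => b₂₀ * t ^ 2 + q t 0 - v₃)
        (b₂₀ * (2 * 0) + pdx q 0 0) (0 : ℝ) :=
      ((h1.const_mul b₂₀).add (sliceX_hasDerivAt hq 0 0)).sub_const v₃
    have hB2 : HasDerivAt (fun t : ℝ => pdy q t 0) (pdx (pdy q) 0 0) (0 : ℝ) :=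
      sliceX_hasDerivAt (contDiff_pdy hq) 0 0
    have hC : HasDerivAt (fun t : ℝ => r t 0 - v₄) (pdx r 0 0) (0 : ℝ) :=
      (sliceX_hasDerivAt hr 0 0).sub_const v₄
    have hC2 : HasDerivAt (fun t : ℝ => pdy r t 0) (pdx (pdy r) 0 0) (0 : ℝ) :=
      sliceX_hasDerivAt (contDiff_pdy hr) 0 0
    have H := ((((hA.const_mul 2).mul hA2).add ((hB.const_mul 2).mul hB2)).add
      ((hC.const_mul 2).mul hC2))
    have : pdx (pdy D) 0 0 = deriv (fun t : ℝ => pdy D t 0) 0 := rfl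
    rw [this, hF]; refine H.deriv.trans ?_
    simp only [hp00, hpx, hpy, hpyx, hq00, hqx, hqy, hqyx, hr00, hrx, hry, hryx]
    ring
  -- entry (1,1)
  have e22 : pdy (pdy D) 0 0 = -4 * v₂ := by
    have hF : (fun t : ℝ => pdy D 0 t)
        = fun t : ℝ => 2 * (a₂₀ * 0 ^ 2 + t ^ 2 + p 0 t - v₂) * (2 * t + pdy p 0 t)
          + 2 * (b₂₀ * 0 ^ 2 + q 0 t - v₃) * pdy q 0 t
          + 2 * (r 0 t - v₄) * pdy r 0 t := funext fun t => hdy 0 t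
    have h1 : HasDerivAt (fun t : ℝ => t ^ 2) (2 * 0) (0 : ℝ) := by
      simpa using hasDerivAt_pow 2 (0 : ℝ)
    have hA : HasDerivAt (fun t : ℝ => a₂₀ * 0 ^ 2 + t ^ 2 + p 0 t - v₂)
        (0 + 2 * 0 + pdy p 0 0) (0 : ℝ) :=
      (((hasDerivAt_const (0 : ℝ) (a₂₀ * 0 ^ 2)).add h1).add
        (sliceY_hasDerivAt hp 0 0)).sub_const v₂
    have hA2 : HasDerivAt (fun t : ℝ => 2 * t + pdy p 0 t)
        (2 + pdy (pdy p) 0 0) (0 : ℝ) := by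
      have := ((hasDerivAt_id (0 : ℝ)).const_mul (2 : ℝ)).add
        (sliceY_hasDerivAt (contDiff_pdy hp) 0 0)
      simp only [mul_one] at this; exact this
    have hB : HasDerivAt (fun t : ℝ => b₂₀ * 0 ^ 2 + q 0 t - v₃)
        (0 + pdy q 0 0) (0 : ℝ) :=
      ((hasDerivAt_const (0 : ℝ) (b₂₀ * 0 ^ 2)).add (sliceY_hasDerivAt hq 0 0)).sub_const v₃
    have hB2 : HasDerivAt (fun t : ℝ => pdy q 0 t) (pdy (pdy q) 0 0) (0 : ℝ) :=
      sliceY_hasDerivAt (contDiff_pdy hq) 0 0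
    have hC : HasDerivAt (fun t : ℝ => r 0 t - v₄) (pdy r 0 0) (0 : ℝ) :=
      (sliceY_hasDerivAt hr 0 0).sub_const v₄
    have hC2 : HasDerivAt (fun t : ℝ => pdy r 0 t) (pdy (pdy r) 0 0) (0 : ℝ) :=
      sliceY_hasDerivAt (contDiff_pdy hr) 0 0
    have H := ((((hA.const_mul 2).mul hA2).add ((hB.const_mul 2).mul hB2)).add
      ((hC.const_mul 2).mul hC2))
    have : pdy (pdy D) 0 0 = deriv (fun t : ℝ => pdy D 0 t) 0 := rfl
    rw [this, hF]; refine H.deriv.trans ?_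
    simp only [hp00, hpy, hpyy, hq00, hqy, hqyy, hr00, hry, hryy]
    ring
  rw [hessAt0, e11, e12, e21, e22]

/-- For the normal form `f(x,y) = (x, a₂₀x² + y² + p, b₂₀x² + q, r)` with `b₂₀ ≠ 0`
(a semiumbilic 𝓜₂-point) and `a = (0, v₂, v₃, v₄)`, the Hessian of `d_a` at the origin
is zero iff `v₂ = 0` and `v₃ = 1/(2b₂₀)` (with `v₄` arbitrary); the resulting line of
umbilical foci is the intersection of the two planes constituting the focal set. -/
theorem stmt9 (a₂₀ b₂₀ : ℝ) (hb₂₀ : b₂₀ ≠ 0) (p q r : ℝ → ℝ → ℝ)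
    (hp : ContDiff ℝ (⊤ : ℕ∞) (fun w : ℝ × ℝ => p w.1 w.2))
    (hq : ContDiff ℝ (⊤ : ℕ∞) (fun w : ℝ × ℝ => q w.1 w.2))
    (hr : ContDiff ℝ (⊤ : ℕ∞) (fun w : ℝ × ℝ => r w.1 w.2))
    (hpj : jet2ZeroAt0 p) (hqj : jet2ZeroAt0 q) (hrj : jet2ZeroAt0 r) :
    (∀ v₂ v₃ v₄ : ℝ,
      hessAt0 (fun x y => x ^ 2 + (a₂₀ * x ^ 2 + y ^ 2 + p x y - v₂) ^ 2
        + (b₂₀ * x ^ 2 + q x y - v₃) ^ 2 + (r x y - v₄) ^ 2) = 0 ↔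
      (v₂ = 0 ∧ v₃ = 1 / (2 * b₂₀))) ∧
    ({w : ℝ × ℝ × ℝ |
        hessAt0 (fun x y => x ^ 2 + (a₂₀ * x ^ 2 + y ^ 2 + p x y - w.1) ^ 2
          + (b₂₀ * x ^ 2 + q x y - w.2.1) ^ 2 + (r x y - w.2.2) ^ 2) = 0}
      = {w : ℝ × ℝ × ℝ | w.1 = 0 ∧ w.2.1 = 1 / (2 * b₂₀)}) ∧
    ({w : ℝ × ℝ × ℝ | w.1 = 0 ∧ w.2.1 = 1 / (2 * b₂₀)}
      = {w : ℝ × ℝ × ℝ | w.1 = 0} ∩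
        {w : ℝ × ℝ × ℝ | 2 * a₂₀ * w.1 + 2 * b₂₀ * w.2.1 = 1}) := by
  have main : ∀ v₂ v₃ v₄ : ℝ,
      hessAt0 (fun x y => x ^ 2 + (a₂₀ * x ^ 2 + y ^ 2 + p x y - v₂) ^ 2
        + (b₂₀ * x ^ 2 + q x y - v₃) ^ 2 + (r x y - v₄) ^ 2) = 0 ↔
      (v₂ = 0 ∧ v₃ = 1 / (2 * b₂₀)) := by
    intro v₂ v₃ v₄
    rw [hess_d a₂₀ b₂₀ v₂ v₃ v₄ hp hq hr hpj hqj hrj, mat2_eq_zero]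
    constructor
    · rintro ⟨h1, -, -, h4⟩
      have hv2 : v₂ = 0 := by linarith
      refine ⟨hv2, ?_⟩
      subst hv2
      field_simp
      linear_combination (-1 / 2 : ℝ) * h1
    · rintro ⟨h2, h3⟩
      subst h2; subst h3
      refine ⟨?_, rfl, rfl, by ring⟩
      field_simp
      ring
  refine ⟨main, ?_, ?_⟩
  · ext w
    simpa using main w.1 w.2.1 w.2.2
  · ext w
    simp only [Set.mem_setOf_eq, Set.mem_inter_iff]
    constructor
    · rintro ⟨h1, h2⟩
      refine ⟨h1, ?_⟩
      rw [h1, h2]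
      field_simp
      ring
    · rintro ⟨h1, h2⟩
      refine ⟨h1, ?_⟩
      rw [h1] at h2
      field_simp
      linear_combination h2
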